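/- Let p be an odd prime and K a finite p-group with an automorphism θ of order dividing 2. Then for every w ∈ K with w·θ(w) = 1, there exists k ∈ K with w = k⁻¹θ(k). -/
import Mathlib


/-- For a finite `p`-group `K` (`p` odd) with an automorphism `θ` of order
dividing 2, every `w` with `w · θ(w) = 1` is of the form `k⁻¹ θ(k)`. -/
theorem stmt12 (p : ℕ) [Fact p.Prime] (hp : p ≠ 2)
    (K : Type*) [Group K] [Fintype K] (hK : IsPGroup p K)
    (θ : K ≃* K) (hθ : ∀ k, θ (θ k) = k)
    (w : K) (hw : w * θ w = 1) :
    ∃ k : K, w = k⁻¹ * θ k := by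
  have hθw : θ w = w⁻¹ := (mul_eq_one_iff_inv_eq.mp hw).symm
  obtain ⟨n, hn⟩ := hK w
  have hdvd : orderOf w ∣ p ^ n := orderOf_dvd_of_pow_eq_one hn
  have hodd : Odd (orderOf w) := by
    rw [Nat.odd_iff, ← Nat.two_dvd_ne_zero]
    intro h2
    have : (2 : ℕ) ∣ p := (Nat.Prime.prime Nat.prime_two).dvd_of_dvd_pow
      (h2.trans hdvd)
    have := (Nat.prime_dvd_prime_iff_eq Nat.prime_two (Fact.out : p.Prime)).mp this
    exact hp this.symm
  obtain ⟨t, ht⟩ := hodd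
  refine ⟨(w ^ (t + 1))⁻¹, ?_⟩
  rw [map_inv, map_pow, hθw, inv_inv, inv_pow, inv_inv, ← pow_add]
  have h : t + 1 + (t + 1) = orderOf w + 1 := by omega
  rw [h, pow_succ, pow_orderOf_eq_one, one_mul]
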